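/- Let P, K be positive integers, ε > 0, ω ∈ ℝ^K, S a P×P Hermitian positive semidefinite complex matrix, and define L(a) = tr(S Ĉ(a)^{-1}) + log det Ĉ(a) where Ĉ(a) = Σ_{k=1}^K s(a_k) v(ω_k) v(ω_k)^H + ε I. Then for each k, the partial derivative of L with respect to a_k at a equals s'(a_k) · v(ω_k)^H E v(ω_k), where E = Ĉ(a)^{-1}(Ĉ(a) − S)Ĉ(a)^{-1} and s'(a) = e^a/(1+e^a) is the sigmoid function. -/

import Mathlib

/-!
Moving `a_k` changes `Ĉ(a)` by the rank-one term `(s(t) - s(a_k)) v vᴴ` with `v = v(ω_k)`.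
Along such a line `C + c v vᴴ`, the matrix determinant lemma gives
`det = det C · (1 + c vᴴ C⁻¹ v)` and Sherman–Morrison gives
`(C + c v vᴴ)⁻¹ = C⁻¹ - c / (1 + c vᴴ C⁻¹ v) · C⁻¹ v vᴴ C⁻¹`, so both terms of `L` are explicit
scalar functions of `c`, with derivatives `vᴴ C⁻¹ v` and `-vᴴ C⁻¹ S C⁻¹ v` at `c = 0`.
Their sum is `vᴴ E v`, and the chain rule through softplus contributes the factor `s'(a_k)`.
-/

open Matrix
open scoped ComplexOrder

/-- The rank-one Hermitian matrix `v vᴴ` formed from a vector `v ∈ ℂ^P`. -/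
noncomputable def outer {P : ℕ} (v : Fin P → ℂ) : Matrix (Fin P) (Fin P) ℂ :=
  Matrix.of fun p q => v p * star (v q)

/-- The steering vector `v(ω) ∈ ℂ^P`, `v(ω)_p = e^{iωp}` for `p = 0, …, P−1`. -/
noncomputable def steer (P : ℕ) (ω : ℝ) : Fin P → ℂ :=
  fun p => Complex.exp (Complex.I * (ω : ℂ) * ((p : ℕ) : ℂ))

/-- The softplus function `s(a) = log(1 + e^a)`. -/
noncomputable def softplus (x : ℝ) : ℝ := Real.log (1 + Real.exp x)

/-- The sigmoid function `s'(a) = e^a / (1 + e^a)`, the derivative of softplus. -/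
noncomputable def sigmoid (x : ℝ) : ℝ := Real.exp x / (1 + Real.exp x)

/-- The parameterized covariance `Ĉ(a) = Σ_k s(a_k) v(ω_k) v(ω_k)ᴴ + ε I`. -/
noncomputable def Chat (P K : ℕ) (ε : ℝ) (ω a : Fin K → ℝ) :
    Matrix (Fin P) (Fin P) ℂ :=
  ∑ k, (softplus (a k) : ℂ) • outer (steer P (ω k)) + (ε : ℂ) • 1

/-- The negative log-likelihood `L(a) = tr(S Ĉ(a)⁻¹) + log det Ĉ(a)` (real valued,
since `Ĉ(a)` is Hermitian positive definite and `S` is Hermitian). -/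
noncomputable def nll (P K : ℕ) (ε : ℝ) (ω : Fin K → ℝ) (S : Matrix (Fin P) (Fin P) ℂ)
    (a : Fin K → ℝ) : ℝ :=
  (Matrix.trace (S * (Chat P K ε ω a)⁻¹)).re + Real.log ((Chat P K ε ω a).det).re

lemma hasDerivAt_softplus (x : ℝ) : HasDerivAt softplus (sigmoid x) x :=
  ((Real.hasDerivAt_exp x).const_add 1).log (by positivity)

lemma softplus_nonneg (x : ℝ) : 0 ≤ softplus x :=
  Real.log_nonneg (by linarith [Real.exp_pos x])

section Outer

variable {P : ℕ}

lemma outer_eq_replicateCol_mul_replicateRow (v : Fin P → ℂ) :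
    outer v = replicateCol Unit v * replicateRow Unit (star v) := by
  ext p q
  simp [outer, mul_apply]

lemma posSemidef_outer (v : Fin P → ℂ) : (outer v).PosSemidef := by
  rw [outer_eq_replicateCol_mul_replicateRow, ← conjTranspose_replicateCol]
  exact posSemidef_self_mul_conjTranspose _

lemma trace_mul_outer (A : Matrix (Fin P) (Fin P) ℂ) (v : Fin P → ℂ) :
    trace (A * outer v) = star v ⬝ᵥ (A *ᵥ v) := by
  simp only [trace, diag_apply, mul_apply, outer, of_apply, dotProduct, mulVec,
    Pi.star_apply, Finset.mul_sum]
  exact Finset.sum_congr rfl fun p _ => Finset.sum_congr rfl fun q _ => by ring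

lemma outer_mul_mul_outer (M : Matrix (Fin P) (Fin P) ℂ) (v : Fin P → ℂ) :
    outer v * M * outer v = (star v ⬝ᵥ (M *ᵥ v)) • outer v := by
  ext p s
  simp only [mul_apply, outer, of_apply, Matrix.smul_apply, smul_eq_mul, dotProduct, mulVec,
    Pi.star_apply, Finset.mul_sum, Finset.sum_mul]
  rw [Finset.sum_comm]
  exact Finset.sum_congr rfl fun r _ => Finset.sum_congr rfl fun t _ => by ring

lemma det_add_smul_outer {C : Matrix (Fin P) (Fin P) ℂ} (hC : IsUnit C.det)
    (v : Fin P → ℂ) (c : ℂ) :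
    (C + c • outer v).det = C.det * (1 + c * (star v ⬝ᵥ (C⁻¹ *ᵥ v))) := by
  rw [outer_eq_replicateCol_mul_replicateRow, ← Matrix.smul_mul, ← replicateCol_smul,
    det_add_replicateCol_mul_replicateRow hC, Matrix.mul_assoc, ← replicateCol_mulVec]
  congr 1
  rw [det_unique, Matrix.add_apply, one_apply_eq, replicateRow_mul_replicateCol_apply,
    mulVec_smul, dotProduct_smul, smul_eq_mul]

lemma inv_add_smul_outer {C : Matrix (Fin P) (Fin P) ℂ} (hC : IsUnit C.det)
    (v : Fin P → ℂ) {c : ℂ} (hc : 1 + c * (star v ⬝ᵥ (C⁻¹ *ᵥ v)) ≠ 0) :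
    (C + c • outer v)⁻¹
      = C⁻¹ - (c / (1 + c * (star v ⬝ᵥ (C⁻¹ *ᵥ v)))) • (C⁻¹ * outer v * C⁻¹) := by
  set q := star v ⬝ᵥ (C⁻¹ *ᵥ v)
  set d := c / (1 + c * q)
  apply inv_eq_right_inv
  have hCC : C * C⁻¹ = 1 := mul_nonsing_inv C hC
  have hsandwich : outer v * (C⁻¹ * outer v * C⁻¹) = q • (outer v * C⁻¹) := by
    rw [← Matrix.mul_assoc, ← Matrix.mul_assoc, outer_mul_mul_outer, smul_mul]
  have hcoeff : c - d - c * (d * q) = 0 := by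
    simp only [d]
    field_simp
    ring
  have hcancel : C * (C⁻¹ * outer v * C⁻¹) = outer v * C⁻¹ := by
    rw [← Matrix.mul_assoc, ← Matrix.mul_assoc, hCC, Matrix.one_mul]
  calc (C + c • outer v) * (C⁻¹ - d • (C⁻¹ * outer v * C⁻¹))
      = C * C⁻¹ + (c - d - c * (d * q)) • (outer v * C⁻¹) := by
        simp only [Matrix.add_mul, Matrix.mul_sub, Matrix.smul_mul, Matrix.mul_smul, hsandwich,
          hcancel, smul_smul]
        module
    _ = 1 := by rw [hCC, hcoeff, zero_smul, add_zero]

end Outer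

lemma Chat_posDef (P K : ℕ) {ε : ℝ} (hε : 0 < ε) (ω a : Fin K → ℝ) :
    (Chat P K ε ω a).PosDef :=
  PosDef.posSemidef_add
    (posSemidef_sum _ fun k _ => (posSemidef_outer _).smul
      (Complex.zero_le_real.mpr (softplus_nonneg (a k))))
    (PosDef.one.smul (Complex.zero_lt_real.mpr hε))

lemma Chat_update (P K : ℕ) (ε : ℝ) (ω a : Fin K → ℝ) (k : Fin K) (t : ℝ) :
    Chat P K ε ω (Function.update a k t)
      = Chat P K ε ω a + ((softplus t - softplus (a k) : ℝ) : ℂ) • outer (steer P (ω k)) := by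
  have hdiff : ∑ j, ((softplus (Function.update a k t j) : ℂ) • outer (steer P (ω j))
      - (softplus (a j) : ℂ) • outer (steer P (ω j)))
      = ((softplus t - softplus (a k) : ℝ) : ℂ) • outer (steer P (ω k)) := by
    rw [Fintype.sum_eq_single k fun j hj => by rw [Function.update_of_ne hj, sub_self],
      Function.update_self, ← sub_smul, Complex.ofReal_sub]
  rw [Finset.sum_sub_distrib] at hdiff
  simp only [Chat]
  rw [← hdiff]
  abel

section RankOneLine

variable {P : ℕ} {C : Matrix (Fin P) (Fin P) ℂ} (v : Fin P → ℂ)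

lemma hasDerivAt_re_trace_mul_inv_add_smul_outer (hC : IsUnit C.det)
    (S : Matrix (Fin P) (Fin P) ℂ) :
    HasDerivAt (fun s : ℝ => (trace (S * (C + (s : ℂ) • outer v)⁻¹)).re)
      (-(star v ⬝ᵥ ((C⁻¹ * S * C⁻¹) *ᵥ v))).re 0 := by
  set q := star v ⬝ᵥ (C⁻¹ *ᵥ v)
  have hden : HasDerivAt (fun z : ℂ => 1 + z * q) q 0 := by
    simpa using ((hasDerivAt_id (0 : ℂ)).mul_const q).const_add 1
  have hden0 : (1 : ℂ) + 0 * q ≠ 0 := by simp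
  have hquot : HasDerivAt (fun z : ℂ => z / (1 + z * q)) 1 0 := by
    simpa using (hasDerivAt_id' (0 : ℂ)).fun_div hden hden0
  have htrace : (fun z : ℂ => trace (S * (C + z • outer v)⁻¹)) =ᶠ[nhds 0]
      fun z => trace (S * C⁻¹) - z / (1 + z * q) * star v ⬝ᵥ ((C⁻¹ * S * C⁻¹) *ᵥ v) := by
    filter_upwards [hden.continuousAt.eventually_ne hden0] with z hz
    rw [inv_add_smul_outer hC v hz, mul_sub, Matrix.mul_smul, trace_sub, trace_smul, smul_eq_mul,
      ← Matrix.mul_assoc, ← Matrix.mul_assoc, trace_mul_cycle, ← Matrix.mul_assoc,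
      trace_mul_outer]
  have := ((hquot.mul_const (star v ⬝ᵥ ((C⁻¹ * S * C⁻¹) *ᵥ v))).const_sub
    (trace (S * C⁻¹))).congr_of_eventuallyEq htrace
  simpa using this.real_of_complex (z := 0)

lemma hasDerivAt_log_re_det_add_smul_outer (hC : C.PosDef) :
    HasDerivAt (fun s : ℝ => Real.log (C + (s : ℂ) • outer v).det.re)
      (star v ⬝ᵥ (C⁻¹ *ᵥ v)).re 0 := by
  obtain ⟨hdet_re, hdet_im⟩ : 0 < C.det.re ∧ 0 = C.det.im := by
    simpa using Complex.lt_def.mp hC.det_pos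
  have hq_im := (Complex.nonneg_iff.mp (hC.inv.posSemidef.dotProduct_mulVec_nonneg v)).2
  -- `det C` and `vᴴ C⁻¹ v` are real, so taking real parts commutes with the product.
  have hdet : ∀ s : ℝ, (C + (s : ℂ) • outer v).det.re
      = C.det.re * (1 + s * (star v ⬝ᵥ (C⁻¹ *ᵥ v)).re) := by
    intro s
    rw [det_add_smul_outer hC.det_pos.ne'.isUnit, Complex.mul_re]
    simp [← hq_im, ← hdet_im]
  set q := star v ⬝ᵥ (C⁻¹ *ᵥ v)
  simp_rw [hdet]
  have := ((((hasDerivAt_id' (0 : ℝ)).mul_const q.re).const_add 1).const_mul C.det.re).log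
    (by simpa using hdet_re.ne')
  convert this using 1
  field_simp
  ring

end RankOneLine

theorem stmt_9_general (P K : ℕ) (ε : ℝ) (hε : 0 < ε)
    (ω : Fin K → ℝ) (S : Matrix (Fin P) (Fin P) ℂ)
    (a : Fin K → ℝ) (k : Fin K) :
    HasDerivAt (fun t => nll P K ε ω S (Function.update a k t))
      (sigmoid (a k) *
        (star (steer P (ω k)) ⬝ᵥ
          (((Chat P K ε ω a)⁻¹ * (Chat P K ε ω a - S) * (Chat P K ε ω a)⁻¹) *ᵥ
            steer P (ω k))).re)
      (a k) := by
  set C := Chat P K ε ω a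
  set v := steer P (ω k)
  have hC : C.PosDef := Chat_posDef P K hε ω a
  have hline := (hasDerivAt_re_trace_mul_inv_add_smul_outer v hC.det_pos.ne'.isUnit S).add
    (hasDerivAt_log_re_det_add_smul_outer v hC)
  have hshift : HasDerivAt (fun t => softplus t - softplus (a k)) (sigmoid (a k)) (a k) :=
    (hasDerivAt_softplus _).sub_const _
  have hE : star v ⬝ᵥ ((C⁻¹ * (C - S) * C⁻¹) *ᵥ v)
      = star v ⬝ᵥ (C⁻¹ *ᵥ v) - star v ⬝ᵥ ((C⁻¹ * S * C⁻¹) *ᵥ v) := by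
    rw [Matrix.mul_sub, nonsing_inv_mul _ hC.det_pos.ne'.isUnit, Matrix.sub_mul,
      Matrix.one_mul, sub_mulVec, dotProduct_sub]
  refine ((hline.comp_of_eq (a k) hshift (by simp)).congr_deriv ?_).congr_of_eventuallyEq
    (.of_forall fun t => ?_)
  · rw [hE, Complex.sub_re, Complex.neg_re]
    ring
  · simp only [Function.comp_apply, Pi.add_apply, nll, Chat_update]
    rfl

/-- The partial derivative of `L` with respect to `a_k` equals
`s'(a_k) · v(ω_k)ᴴ E v(ω_k)` with `E = Ĉ⁻¹ (Ĉ − S) Ĉ⁻¹`. -/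
theorem stmt_9 (P K : ℕ) (hP : 0 < P) (hK : 0 < K) (ε : ℝ) (hε : 0 < ε)
    (ω : Fin K → ℝ) (S : Matrix (Fin P) (Fin P) ℂ) (hS : S.PosSemidef)
    (a : Fin K → ℝ) (k : Fin K) :
    HasDerivAt (fun t => nll P K ε ω S (Function.update a k t))
      (sigmoid (a k) *
        (star (steer P (ω k)) ⬝ᵥ
          (((Chat P K ε ω a)⁻¹ * (Chat P K ε ω a - S) * (Chat P K ε ω a)⁻¹) *ᵥ
            steer P (ω k))).re)
      (a k) :=
  stmt_9_general P K ε hε ω S a k
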